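/- arXiv:1211.5834 — 2 statements merged into one kernel-verified Lean document; each statement's English description precedes it below -/
import Mathlib

section
/- Let n ≥ 2 be an integer, x₀ ∈ ℝⁿ, 0 < ε < ε₀, and let Q : ℝⁿ → [0,∞] be measurable. Let q(r) := q_{x₀}(r) be the spherical mean of Q over S(x₀,r), and assume that r ↦ q(r) is measurable with 0 < q(r) < ∞ for almost every r ∈ (ε, ε₀). Set ψ(t) = 1/(t·q(t)^{1/(n−1)}). Then ∫_{{x : ε < |x−x₀| < ε₀}} Q(x)·ψ(|x−x₀|)ⁿ dm(x) = ω_{n−1}·∫_ε^{ε₀} ψ(t) dt, as an equality in [0,∞]. -/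
open MeasureTheory Set Filter ENNReal Metric

/-- The surface measure on the unit sphere of `ℝⁿ` (total mass `ω_{n-1}`). -/
noncomputable def sphereMeasure (n : ℕ) :
    Measure (Metric.sphere (0 : EuclideanSpace ℝ (Fin n)) 1) :=
  (volume : Measure (EuclideanSpace ℝ (Fin n))).toSphere

/-- The area `ω_{n-1}` of the unit sphere in `ℝⁿ`. -/
noncomputable def sphereArea (n : ℕ) : ℝ≥0∞ := sphereMeasure n Set.univ

/-- The spherical mean `q_{x₀}(r)` of `Q` over the sphere `S(x₀, r)`. -/
noncomputable def sphericalMean (n : ℕ) (Q : EuclideanSpace ℝ (Fin n) → ℝ≥0∞)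
    (x₀ : EuclideanSpace ℝ (Fin n)) (r : ℝ) : ℝ≥0∞ :=
  (∫⁻ θ : Metric.sphere (0 : EuclideanSpace ℝ (Fin n)) 1,
      Q (x₀ + r • (θ : EuclideanSpace ℝ (Fin n))) ∂(sphereMeasure n)) / sphereArea n

/-
In polar coordinates `x = x₀ + r θ` Lebesgue measure becomes `r^{n-1} dr dσ(θ)`, so integrating
a function of the form `Q(x) f(|x - x₀|)` first over the spheres `S(x₀, r)` turns the left-hand
side into `∫_ε^{ε₀} r^{n-1} ψ(r)ⁿ ω_{n-1} q(r) dr`. Wherever `0 < q(r) < ∞` the choice of `ψ`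
makes `r^{n-1} q(r) = (r q(r)^{1/(n-1)})^{n-1} = ψ(r)^{1-n}`, so the integrand is `ω_{n-1} ψ(r)`.
-/

namespace ENNReal

theorem pow_pred_mul_inv_pow {x : ℝ≥0∞} (h0 : x ≠ 0) (htop : x ≠ ∞) {n : ℕ} (hn : n ≠ 0) :
    x ^ (n - 1) * x⁻¹ ^ n = x⁻¹ := by
  obtain ⟨k, rfl⟩ := Nat.exists_eq_succ_of_ne_zero hn
  rw [Nat.succ_sub_one, pow_succ, ← mul_assoc, ← mul_pow, ENNReal.mul_inv_cancel h0 htop,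
    one_pow, one_mul]

theorem ofReal_pow_pred_mul_mul_inv_pow {n : ℕ} (hn : 2 ≤ n) {t : ℝ} (ht : 0 < t) {a : ℝ≥0∞}
    (ha0 : a ≠ 0) (hatop : a ≠ ∞) :
    ENNReal.ofReal (t ^ (n - 1)) * a * (ENNReal.ofReal t * a ^ (1 / ((n : ℝ) - 1)))⁻¹ ^ n =
      (ENNReal.ofReal t * a ^ (1 / ((n : ℝ) - 1)))⁻¹ := by
  have hexp : 1 / ((n : ℝ) - 1) = ((n - 1 : ℕ) : ℝ)⁻¹ := by
    rw [Nat.cast_sub (by omega), one_div, Nat.cast_one]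
  set x := ENNReal.ofReal t * a ^ (1 / ((n : ℝ) - 1))
  have hx0 : x ≠ 0 :=
    mul_ne_zero (ofReal_pos.2 ht).ne' (rpow_pos (pos_iff_ne_zero.2 ha0) hatop).ne'
  have hxtop : x ≠ ∞ :=
    mul_ne_top ofReal_ne_top (rpow_ne_top_of_nonneg (by rw [hexp]; positivity) hatop)
  have hxpow : ENNReal.ofReal (t ^ (n - 1)) * a = x ^ (n - 1) := by
    rw [mul_pow, ofReal_pow ht.le, hexp, rpow_inv_natCast_pow (by omega)]
  rw [hxpow, pow_pred_mul_inv_pow hx0 hxtop (by omega)]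

end ENNReal

section PolarCoordinates

variable {E : Type*} [NormedAddCommGroup E] [NormedSpace ℝ E] [FiniteDimensional ℝ E]
  [MeasurableSpace E] [BorelSpace E] [Nontrivial E] (μ : Measure E) [μ.IsAddHaarMeasure]

theorem lintegral_eq_lintegral_Ioi_lintegral_sphere (x₀ : E) {g : E → ℝ≥0∞}
    (hg : Measurable g) :
    ∫⁻ x, g x ∂μ = ∫⁻ r in Ioi 0, ENNReal.ofReal (r ^ (Module.finrank ℝ E - 1)) *
      ∫⁻ θ : sphere (0 : E) 1, g (x₀ + r • (θ : E)) ∂μ.toSphere := by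
  have hg' : Measurable fun p : sphere (0 : E) 1 × Ioi (0 : ℝ) ↦ g (x₀ + p.2.1 • p.1.1) := by
    fun_prop
  calc ∫⁻ x, g x ∂μ = ∫⁻ x : ({0}ᶜ : Set E), g (x₀ + x) ∂μ.comap (↑) := by
        rw [← lintegral_add_left_eq_self g x₀, lintegral_subtype_comap
          (measurableSet_singleton _).compl fun x ↦ g (x₀ + x), restrict_compl_singleton]
    _ = ∫⁻ p, g (x₀ + p.2.1 • p.1.1)
          ∂μ.toSphere.prod (.volumeIoiPow (Module.finrank ℝ E - 1)) := by
        rw [← μ.measurePreserving_homeomorphUnitSphereProd.lintegral_comp_emb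
          (Homeomorph.measurableEmbedding _)]
        refine lintegral_congr fun x ↦ ?_
        have hx : ‖(x : E)‖ ≠ 0 := norm_ne_zero_iff.2 x.2
        simp [smul_smul, mul_inv_cancel₀ hx]
    _ = ∫⁻ r, ∫⁻ θ, g (x₀ + r.1 • θ.1) ∂μ.toSphere
          ∂.volumeIoiPow (Module.finrank ℝ E - 1) := lintegral_prod_symm _ hg'.aemeasurable
    _ = _ := by
        rw [Measure.volumeIoiPow, lintegral_withDensity_eq_lintegral_mul _ (by fun_prop)
          hg'.lintegral_prod_left', ← lintegral_subtype_comap measurableSet_Ioi]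
        rfl

theorem setLIntegral_dist_preimage_mul_eq (x₀ : E) {s : Set ℝ} (hs : MeasurableSet s)
    (hs0 : s ⊆ Ioi 0) {Q : E → ℝ≥0∞} (hQ : Measurable Q) {f : ℝ → ℝ≥0∞} (hf : Measurable f) :
    ∫⁻ x in (dist · x₀) ⁻¹' s, Q x * f (dist x x₀) ∂μ =
      ∫⁻ r in s, ENNReal.ofReal (r ^ (Module.finrank ℝ E - 1)) * f r *
        ∫⁻ θ : sphere (0 : E) 1, Q (x₀ + r • (θ : E)) ∂μ.toSphere := by
  have hdist : Measurable (dist · x₀) := measurable_id.dist measurable_const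
  have hQr : ∀ r : ℝ, Measurable fun θ : sphere (0 : E) 1 ↦ Q (x₀ + r • (θ : E)) := fun r ↦
    hQ.comp (by fun_prop)
  calc ∫⁻ x in (dist · x₀) ⁻¹' s, Q x * f (dist x x₀) ∂μ
      = ∫⁻ x, ((dist · x₀) ⁻¹' s).indicator (fun x ↦ Q x * f (dist x x₀)) x ∂μ :=
        (lintegral_indicator (hdist hs) _).symm
    _ = ∫⁻ r in Ioi 0, ENNReal.ofReal (r ^ (Module.finrank ℝ E - 1)) *
          ∫⁻ θ : sphere (0 : E) 1, ((dist · x₀) ⁻¹' s).indicator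
            (fun x ↦ Q x * f (dist x x₀)) (x₀ + r • (θ : E)) ∂μ.toSphere :=
        lintegral_eq_lintegral_Ioi_lintegral_sphere μ x₀
          ((hQ.mul (hf.comp hdist)).indicator (hdist hs))
    _ = ∫⁻ r in Ioi 0, s.indicator (fun r ↦ ENNReal.ofReal (r ^ (Module.finrank ℝ E - 1)) * f r *
          ∫⁻ θ : sphere (0 : E) 1, Q (x₀ + r • (θ : E)) ∂μ.toSphere) r := by
        refine setLIntegral_congr_fun measurableSet_Ioi fun r (hr : 0 < r) ↦ ?_
        have hθ : ∀ θ : sphere (0 : E) 1, dist (x₀ + r • (θ : E)) x₀ = r := fun θ ↦ by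
          simp [dist_self_add_left, norm_smul, abs_of_pos hr]
        by_cases hrs : r ∈ s
        · simp [hθ, hrs, lintegral_mul_const _ (hQr r), mul_assoc, mul_comm (f r)]
        · simp [hθ, hrs]
    _ = _ := by rw [lintegral_indicator hs, Measure.restrict_restrict hs, inter_eq_left.2 hs0]

end PolarCoordinates

theorem lintegral_sphere_eq_sphericalMean_mul {n : ℕ} (hn : n ≠ 0)
    (Q : EuclideanSpace ℝ (Fin n) → ℝ≥0∞) (x₀ : EuclideanSpace ℝ (Fin n)) (r : ℝ) :
    ∫⁻ θ : sphere (0 : EuclideanSpace ℝ (Fin n)) 1, Q (x₀ + r • (θ : EuclideanSpace ℝ (Fin n)))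
        ∂(volume : Measure (EuclideanSpace ℝ (Fin n))).toSphere =
      sphericalMean n Q x₀ r * sphereArea n := by
  unfold sphericalMean sphereArea sphereMeasure
  refine (ENNReal.div_mul_cancel ?_ (measure_ne_top _ _)).symm
  rw [Ne, Measure.measure_univ_eq_zero,
    Measure.toSphere_eq_zero_iff_finrank, finrank_euclideanSpace_fin]
  exact hn

theorem stmt2_general (n : ℕ) (hn : 2 ≤ n) (x₀ : EuclideanSpace ℝ (Fin n)) (ε ε₀ : ℝ)
    (hε : 0 < ε)
    (Q : EuclideanSpace ℝ (Fin n) → ℝ≥0∞) (hQ : Measurable Q)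
    (q : ℝ → ℝ≥0∞) (hq : ∀ r : ℝ, q r = sphericalMean n Q x₀ r)
    (hqmeas : Measurable q)
    (hqfin : ∀ᵐ r ∂(volume.restrict (Set.Ioo ε ε₀)), 0 < q r ∧ q r < ∞)
    (ψ : ℝ → ℝ≥0∞)
    (hψ : ∀ t : ℝ, ψ t = (ENNReal.ofReal t * q t ^ (1 / ((n : ℝ) - 1)))⁻¹) :
    ∫⁻ x in {x : EuclideanSpace ℝ (Fin n) | ε < dist x x₀ ∧ dist x x₀ < ε₀},
        Q x * ψ (dist x x₀) ^ n =
      sphereArea n * ∫⁻ t in Set.Ioo ε ε₀, ψ t := by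
  have : Nontrivial (EuclideanSpace ℝ (Fin n)) := by
    have : Nonempty (Fin n) := ⟨⟨0, by omega⟩⟩
    infer_instance
  have hψm : Measurable ψ := by
    rw [funext hψ]
    exact (measurable_id.ennreal_ofReal.mul (hqmeas.pow_const _)).inv
  change ∫⁻ x in (dist · x₀) ⁻¹' Ioo ε ε₀, Q x * ψ (dist x x₀) ^ n ∂volume = _
  rw [setLIntegral_dist_preimage_mul_eq volume x₀ measurableSet_Ioo (fun t ht ↦ hε.trans ht.1) hQ
    (hψm.pow_const n), finrank_euclideanSpace_fin, ← lintegral_const_mul _ hψm]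
  refine lintegral_congr_ae ?_
  filter_upwards [hqfin, ae_restrict_mem measurableSet_Ioo] with t ⟨hq0, hqtop⟩ ht
  rw [lintegral_sphere_eq_sphericalMean_mul (by omega), ← hq, hψ]
  calc _ = ENNReal.ofReal (t ^ (n - 1)) * q t *
        (ENNReal.ofReal t * q t ^ (1 / ((n : ℝ) - 1)))⁻¹ ^ n * sphereArea n := by ring
    _ = _ := by
      rw [ENNReal.ofReal_pow_pred_mul_mul_inv_pow hn (hε.trans ht.1) hq0.ne' hqtop.ne, mul_comm]

/-- With `ψ(t) = 1/(t·q(t)^{1/(n-1)})`, `q` the spherical mean of `Q` at `x₀`,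
one has `∫_{ε<|x-x₀|<ε₀} Q(x) ψ(|x-x₀|)ⁿ dm(x) = ω_{n-1} ∫_ε^{ε₀} ψ(t) dt`. -/
theorem stmt2 (n : ℕ) (hn : 2 ≤ n) (x₀ : EuclideanSpace ℝ (Fin n)) (ε ε₀ : ℝ)
    (hε : 0 < ε) (hεε₀ : ε < ε₀)
    (Q : EuclideanSpace ℝ (Fin n) → ℝ≥0∞) (hQ : Measurable Q)
    (q : ℝ → ℝ≥0∞) (hq : ∀ r : ℝ, q r = sphericalMean n Q x₀ r)
    (hqmeas : Measurable q)
    (hqfin : ∀ᵐ r ∂(volume.restrict (Set.Ioo ε ε₀)), 0 < q r ∧ q r < ∞)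
    (ψ : ℝ → ℝ≥0∞)
    (hψ : ∀ t : ℝ, ψ t = (ENNReal.ofReal t * q t ^ (1 / ((n : ℝ) - 1)))⁻¹) :
    ∫⁻ x in {x : EuclideanSpace ℝ (Fin n) | ε < dist x x₀ ∧ dist x x₀ < ε₀},
        Q x * ψ (dist x x₀) ^ n =
      sphereArea n * ∫⁻ t in Set.Ioo ε ε₀, ψ t :=
  stmt2_general n hn x₀ ε ε₀ hε Q hQ q hq hqmeas hqfin ψ hψ
end

section
/- With the construction of the maps f_m from a measurable Q : 𝔹ⁿ → [1,∞] whose spherical mean q₀ at the origin satisfies 1 ≤ q₀(r) < ∞ for almost every r ∈ (0,1): if in addition ∫_0^{ε₀} dt/(t·q₀(t)^{1/(n−1)}) < ∞ for some ε₀ ∈ (0,1), then there exists σ > 0 such that for every integer m ≥ 2 and every x ∈ 𝔹ⁿ with |x| = 1/m one has |f_m(x) − f_m(0)| = ρ_m(1/m) ≥ σ; consequently, the family {f_m : m ≥ 2} is not equicontinuous at the origin. -/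
open MeasureTheory Set Filter Metric ENNReal

/-- `exp(-a)` for `a ∈ [0,∞]`, with the convention `exp(-∞) = 0`. -/
noncomputable def expNeg (a : ℝ≥0∞) : ℝ := if a = ⊤ then 0 else Real.exp (-a.toReal)

/-- The spherical mean of `Q` at the origin over the sphere of radius `r`. -/
noncomputable def sphericalMean₀ (n : ℕ) (Q : EuclideanSpace ℝ (Fin n) → ℝ≥0∞) (r : ℝ) :
    ℝ≥0∞ :=
  (∫⁻ θ : Metric.sphere (0 : EuclideanSpace ℝ (Fin n)) 1,
      Q (r • (θ : EuclideanSpace ℝ (Fin n))) ∂(sphereMeasure n)) / sphereArea n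

/-- `q_{0,m}(r) = q₀(r)` for `r > 1/m` and `= 1` for `r ≤ 1/m`. -/
noncomputable def qZeroM (m : ℕ) (q₀ : ℝ → ℝ≥0∞) (r : ℝ) : ℝ≥0∞ :=
  if 1 / (m : ℝ) < r then q₀ r else 1

/-- `ρ_m(r) = exp(-∫_r^1 dt/(t·q_{0,m}(t)^{1/(n-1)}))`. -/
noncomputable def rhoM (n m : ℕ) (q₀ : ℝ → ℝ≥0∞) (r : ℝ) : ℝ :=
  expNeg (∫⁻ t in Set.Ioo r 1,
    (ENNReal.ofReal t * qZeroM m q₀ t ^ (1 / ((n : ℝ) - 1)))⁻¹)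

open Classical in
/-- `f_m(x) = ρ_m(|x|)·x/|x|` for `x ≠ 0`, `f_m(0) = 0`. -/
noncomputable def fM (n m : ℕ) (q₀ : ℝ → ℝ≥0∞) (x : EuclideanSpace ℝ (Fin n)) :
    EuclideanSpace ℝ (Fin n) :=
  if x = 0 then 0 else (rhoM n m q₀ ‖x‖ / ‖x‖) • x
/-!
Since `q_{0,m} = q₀` on `(1/m, 1)`, the exponent of `ρ_m(1/m)` is at most
`∫_0^1 dt/(t·q₀(t)^{1/(n-1)})`, uniformly in `m`. That integral is finite: on `(0, ε₀)` by
hypothesis, and on `[ε₀, 1)` because `q₀ ≥ 1` bounds the integrand by `1/ε₀`. Hence `f_m` sends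
the sphere of radius `1/m` to a sphere of radius at least `σ = exp(-∫_0^1 …) > 0`, while
`f_m(0) = 0`, which rules out equicontinuity at the origin.
-/

lemma expNeg_nonneg (a : ℝ≥0∞) : 0 ≤ expNeg a := by
  unfold expNeg
  split_ifs
  exacts [le_rfl, (Real.exp_pos _).le]

lemma expNeg_pos {a : ℝ≥0∞} (ha : a ≠ ⊤) : 0 < expNeg a := by
  rw [expNeg, if_neg ha]
  exact Real.exp_pos _

lemma expNeg_antitone : Antitone expNeg := by
  intro a b hab
  by_cases hb : b = ⊤
  · rw [expNeg, if_pos hb]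
    exact expNeg_nonneg a
  · rw [expNeg, expNeg, if_neg hb, if_neg (ne_top_of_le_ne_top hb hab), Real.exp_le_exp,
      neg_le_neg_iff]
    exact ENNReal.toReal_mono hb hab

lemma rhoM_nonneg (n m : ℕ) (q₀ : ℝ → ℝ≥0∞) (r : ℝ) : 0 ≤ rhoM n m q₀ r :=
  expNeg_nonneg _

lemma norm_fM_sub_fM_zero {n m : ℕ} {q₀ : ℝ → ℝ≥0∞} {x : EuclideanSpace ℝ (Fin n)}
    (hx : x ≠ 0) : ‖fM n m q₀ x - fM n m q₀ 0‖ = rhoM n m q₀ ‖x‖ := by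
  rw [fM, fM, if_neg hx, if_pos rfl, sub_zero, norm_smul, Real.norm_eq_abs,
    abs_of_nonneg (div_nonneg (rhoM_nonneg n m q₀ ‖x‖) (norm_nonneg x)),
    div_mul_cancel₀ _ (norm_ne_zero_iff.mpr hx)]

lemma inv_ofReal_mul_rpow_le {ε t e : ℝ} {q : ℝ≥0∞} (he : 0 ≤ e) (hq : 1 ≤ q) (hεt : ε ≤ t) :
    (ENNReal.ofReal t * q ^ e)⁻¹ ≤ (ENNReal.ofReal ε)⁻¹ := by
  apply ENNReal.inv_le_inv'
  calc ENNReal.ofReal ε = ENNReal.ofReal ε * 1 ^ e := by rw [ENNReal.one_rpow, mul_one]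
    _ ≤ ENNReal.ofReal t * q ^ e := by gcongr

lemma setLIntegral_Ioo_zero_one_lt_top {q : ℝ → ℝ≥0∞} {e ε₀ : ℝ} (he : 0 ≤ e)
    (hq : ∀ᵐ t ∂(volume.restrict (Ioo (0 : ℝ) 1)), 1 ≤ q t) (hε₀ : ε₀ ∈ Ioo (0 : ℝ) 1)
    (hfin : ∫⁻ t in Ioo 0 ε₀, (ENNReal.ofReal t * q t ^ e)⁻¹ < ⊤) :
    ∫⁻ t in Ioo 0 1, (ENNReal.ofReal t * q t ^ e)⁻¹ < ⊤ := by
  have hsplit : Ioo (0 : ℝ) 1 ⊆ Ioo 0 ε₀ ∪ Ico ε₀ 1 := fun t ht => by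
    rcases lt_or_ge t ε₀ with h | h
    exacts [Or.inl ⟨ht.1, h⟩, Or.inr ⟨h, ht.2⟩]
  have hq' : ∀ᵐ t ∂(volume.restrict (Ico ε₀ 1)), 1 ≤ q t :=
    ae_restrict_of_ae_restrict_of_subset (Ico_subset_Ioo_left hε₀.1) hq
  have htail : ∫⁻ t in Ico ε₀ 1, (ENNReal.ofReal t * q t ^ e)⁻¹
      ≤ (ENNReal.ofReal ε₀)⁻¹ * volume (Ico ε₀ 1) := by
    rw [← setLIntegral_const]
    refine setLIntegral_mono_ae' measurableSet_Ico ?_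
    filter_upwards [(ae_restrict_iff' measurableSet_Ico).mp hq'] with t hqt ht
    exact inv_ofReal_mul_rpow_le he (hqt ht) ht.1
  calc ∫⁻ t in Ioo 0 1, (ENNReal.ofReal t * q t ^ e)⁻¹
      ≤ ∫⁻ t in Ioo 0 ε₀ ∪ Ico ε₀ 1, (ENNReal.ofReal t * q t ^ e)⁻¹ := lintegral_mono_set hsplit
    _ ≤ (∫⁻ t in Ioo 0 ε₀, (ENNReal.ofReal t * q t ^ e)⁻¹)
          + ∫⁻ t in Ico ε₀ 1, (ENNReal.ofReal t * q t ^ e)⁻¹ := lintegral_union_le _ _ _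
    _ < ⊤ := ENNReal.add_lt_top.mpr ⟨hfin, htail.trans_lt (ENNReal.mul_lt_top
          (ENNReal.inv_lt_top.mpr (ENNReal.ofReal_pos.mpr hε₀.1)) (by simp [Real.volume_Ico]))⟩

lemma setLIntegral_qZeroM_le (m : ℕ) (q : ℝ → ℝ≥0∞) (e : ℝ) :
    ∫⁻ t in Ioo (1 / (m : ℝ)) 1, (ENNReal.ofReal t * qZeroM m q t ^ e)⁻¹
      ≤ ∫⁻ t in Ioo 0 1, (ENNReal.ofReal t * q t ^ e)⁻¹ := by
  rw [setLIntegral_congr_fun measurableSet_Ioo fun t ht => by rw [qZeroM, if_pos ht.1]]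
  exact lintegral_mono_set (Ioo_subset_Ioo_left (by positivity))

lemma not_uniformly_small_of_norm_ge {E F : Type*} [NormedAddCommGroup E] [NormedSpace ℝ E]
    [Nontrivial E] [NormedAddCommGroup F] (f : ℕ → E → F) {σ : ℝ} (hσ : 0 < σ)
    (h : ∀ m : ℕ, 2 ≤ m → ∀ x : E, ‖x‖ = 1 / (m : ℝ) → σ ≤ ‖f m x - f m 0‖) :
    ¬ ∀ σ : ℝ, 0 < σ → ∃ Δ : ℝ, 0 < Δ ∧ ∀ m : ℕ, 2 ≤ m →
        ∀ x ∈ ball (0 : E) 1, ‖x - 0‖ < Δ → ‖f m x - f m 0‖ < σ := by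
  intro hsmall
  obtain ⟨Δ, hΔ, hsmallΔ⟩ := hsmall σ hσ
  obtain ⟨k, hk⟩ := exists_nat_one_div_lt hΔ
  obtain ⟨x, hx⟩ := exists_norm_eq E (c := 1 / ((k + 2 : ℕ) : ℝ)) (by positivity)
  have hxk : ‖x‖ < Δ := hx ▸ lt_of_le_of_lt (by gcongr; push_cast; linarith) hk
  have hx1 : ‖x‖ < 1 := by
    rw [hx, div_lt_one (by positivity)]
    exact_mod_cast (by omega : 1 < k + 2)
  exact (h (k + 2) (by omega) x hx).not_gt
    (hsmallΔ (k + 2) (by omega) x (mem_ball_zero_iff.mpr hx1) (by rwa [sub_zero]))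

theorem stmt6_general (n : ℕ) (hn : 2 ≤ n)
    (q₀ : ℝ → ℝ≥0∞)
    (hq₀ae : ∀ᵐ r ∂(volume.restrict (Set.Ioo (0:ℝ) 1)), 1 ≤ q₀ r ∧ q₀ r < ⊤)
    (ε₀ : ℝ) (hε₀ : ε₀ ∈ Set.Ioo (0:ℝ) 1)
    (hfin : ∫⁻ t in Set.Ioo (0:ℝ) ε₀,
      (ENNReal.ofReal t * q₀ t ^ (1 / ((n : ℝ) - 1)))⁻¹ < ⊤) :
    (∃ σ : ℝ, 0 < σ ∧ ∀ m : ℕ, 2 ≤ m →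
      ∀ x : EuclideanSpace ℝ (Fin n), ‖x‖ = 1 / (m : ℝ) →
        ‖fM n m q₀ x - fM n m q₀ 0‖ = rhoM n m q₀ (1 / (m : ℝ)) ∧
          σ ≤ rhoM n m q₀ (1 / (m : ℝ))) ∧
    ¬ (∀ σ : ℝ, 0 < σ → ∃ Δ : ℝ, 0 < Δ ∧ ∀ m : ℕ, 2 ≤ m →
        ∀ x ∈ Metric.ball (0 : EuclideanSpace ℝ (Fin n)) 1, ‖x - 0‖ < Δ →
          ‖fM n m q₀ x - fM n m q₀ 0‖ < σ) := by
  have he : 0 ≤ 1 / ((n : ℝ) - 1) :=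
    one_div_nonneg.mpr (sub_nonneg.mpr (by exact_mod_cast (by omega : 1 ≤ n)))
  have hC := setLIntegral_Ioo_zero_one_lt_top he (hq₀ae.mono fun _ h => h.1) hε₀ hfin
  have hρ (m : ℕ) : expNeg (∫⁻ t in Ioo 0 1, (ENNReal.ofReal t * q₀ t ^ (1 / ((n : ℝ) - 1)))⁻¹)
      ≤ rhoM n m q₀ (1 / (m : ℝ)) :=
    expNeg_antitone (setLIntegral_qZeroM_le m q₀ _)
  have hnorm (m : ℕ) (hm : 2 ≤ m) (x : EuclideanSpace ℝ (Fin n)) (hx : ‖x‖ = 1 / (m : ℝ)) :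
      ‖fM n m q₀ x - fM n m q₀ 0‖ = rhoM n m q₀ (1 / (m : ℝ)) := by
    have hx0 : x ≠ 0 := norm_pos_iff.mp (hx ▸ by positivity)
    rw [norm_fM_sub_fM_zero hx0, hx]
  have : Nonempty (Fin n) := ⟨⟨0, by omega⟩⟩
  refine ⟨⟨_, expNeg_pos hC.ne, fun m hm x hx => ⟨hnorm m hm x hx, hρ m⟩⟩,
    not_uniformly_small_of_norm_ge _ (expNeg_pos hC.ne) fun m hm x hx => ?_⟩
  rw [hnorm m hm x hx]
  exact hρ m

/-- If moreover `∫_0^{ε₀} dt/(t·q₀(t)^{1/(n-1)}) < ∞` for some `ε₀ ∈ (0,1)`, then there is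
`σ > 0` such that for every `m ≥ 2` and every `x` with `|x| = 1/m` one has
`|f_m(x) - f_m(0)| = ρ_m(1/m) ≥ σ`; consequently the family `{f_m : m ≥ 2}` is not
equicontinuous at the origin. -/
theorem stmt6 (n : ℕ) (hn : 2 ≤ n)
    (Q : EuclideanSpace ℝ (Fin n) → ℝ≥0∞) (hQmeas : Measurable Q)
    (hQ1 : ∀ x ∈ Metric.ball (0 : EuclideanSpace ℝ (Fin n)) 1, 1 ≤ Q x)
    (q₀ : ℝ → ℝ≥0∞) (hq₀def : ∀ r : ℝ, q₀ r = sphericalMean₀ n Q r)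
    (hq₀meas : Measurable q₀)
    (hq₀ae : ∀ᵐ r ∂(volume.restrict (Set.Ioo (0:ℝ) 1)), 1 ≤ q₀ r ∧ q₀ r < ⊤)
    (ε₀ : ℝ) (hε₀ : ε₀ ∈ Set.Ioo (0:ℝ) 1)
    (hfin : ∫⁻ t in Set.Ioo (0:ℝ) ε₀,
      (ENNReal.ofReal t * q₀ t ^ (1 / ((n : ℝ) - 1)))⁻¹ < ⊤) :
    (∃ σ : ℝ, 0 < σ ∧ ∀ m : ℕ, 2 ≤ m →
      ∀ x : EuclideanSpace ℝ (Fin n), ‖x‖ = 1 / (m : ℝ) →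
        ‖fM n m q₀ x - fM n m q₀ 0‖ = rhoM n m q₀ (1 / (m : ℝ)) ∧
          σ ≤ rhoM n m q₀ (1 / (m : ℝ))) ∧
    ¬ (∀ σ : ℝ, 0 < σ → ∃ Δ : ℝ, 0 < Δ ∧ ∀ m : ℕ, 2 ≤ m →
        ∀ x ∈ Metric.ball (0 : EuclideanSpace ℝ (Fin n)) 1, ‖x - 0‖ < Δ →
          ‖fM n m q₀ x - fM n m q₀ 0‖ < σ) :=
  stmt6_general n hn q₀ hq₀ae ε₀ hε₀ hfin
end
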